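/- arXiv:2307.07670 — 2 statements merged into one kernel-verified Lean document; each statement's English description precedes it below -/
import Mathlib

section
/- Let (S, (A_i)_{i=1}^m, H, P, (R_i)_{i=1}^m) be a tabular episodic Markov game, π† a deterministic target policy and π⁻ a deterministic policy. Under the d-portion attack, for every agent i, step h, state s, and joint action a: Ṽ^{π†}_{i,h}(s) = V^{π†}_{i,h}(s), and Q̃^{π†}_{i,h}(s,a) = (d_h(s,a)/m)·Q^{π†}_{i,h}(s, π†_h(s)) + (1 − d_h(s,a)/m)·Q^{π†}_{i,h}(s, π⁻_h(s)). -/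
open Finset

namespace MGAttack

variable {S : Type} [Fintype S] [DecidableEq S]
variable {m : ℕ} {A : Fin m → Type} [∀ i, Fintype (A i)] [∀ i, DecidableEq (A i)]

/-- `VA P f π n h s`: expected sum of `f` over `n` steps starting from step `h` in
state `s`, when joint actions are drawn from the joint pmf `π` and states evolve
according to `P`.  With `f` a mean-reward function this is the value function. -/
noncomputable def VA (P : ℕ → S → (∀ i, A i) → S → ℝ) (f : ℕ → S → (∀ i, A i) → ℝ)
    (π : ℕ → S → (∀ i, A i) → ℝ) : ℕ → ℕ → S → ℝ
  | 0, _, _ => 0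
  | n + 1, h, s => ∑ a, π h s a * (f h s a + ∑ s', P h s a s' * VA P f π n (h + 1) s')

/-- Value function `V^π_h(s)` for horizon `H` (steps `h, h+1, …, H`). -/
noncomputable def Vf (P : ℕ → S → (∀ i, A i) → S → ℝ) (R : ℕ → S → (∀ i, A i) → ℝ)
    (π : ℕ → S → (∀ i, A i) → ℝ) (H h : ℕ) (s : S) : ℝ :=
  VA P R π (H + 1 - h) h s

/-- Q-function `Q^π_h(s,a)` for horizon `H`. -/
noncomputable def Qf (P : ℕ → S → (∀ i, A i) → S → ℝ) (R : ℕ → S → (∀ i, A i) → ℝ)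
    (π : ℕ → S → (∀ i, A i) → ℝ) (H h : ℕ) (s : S) (a : ∀ i, A i) : ℝ :=
  R h s a + ∑ s', P h s a s' * VA P R π (H - h) (h + 1) s'

/-- Joint pmf of a Markov product policy. -/
noncomputable def jp (π : ∀ i : Fin m, ℕ → S → A i → ℝ) : ℕ → S → (∀ i, A i) → ℝ :=
  fun h s a => ∏ i, π i h s (a i)

/-- Joint action prescribed by a deterministic (product) policy. -/
def tgtJ (τ : ∀ i : Fin m, ℕ → S → A i) (h : ℕ) (s : S) : ∀ i, A i := fun i => τ i h s

/-- A deterministic policy viewed as a (point-mass) stochastic policy. -/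
noncomputable def detP (τ : ∀ i : Fin m, ℕ → S → A i) : ∀ i : Fin m, ℕ → S → A i → ℝ :=
  fun i h s b => if b = τ i h s then 1 else 0

/-- `P` is a transition kernel for the steps `1, …, H`. -/
def IsKernel (H : ℕ) (P : ℕ → S → (∀ i, A i) → S → ℝ) : Prop :=
  ∀ h ∈ Finset.Icc 1 H, ∀ s a, (∀ s', 0 ≤ P h s a s') ∧ ∑ s', P h s a s' = 1

/-- `π` is a Markov product policy for the steps `1, …, H`. -/
def IsPolicy (H : ℕ) (π : ∀ i : Fin m, ℕ → S → A i → ℝ) : Prop :=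
  ∀ i : Fin m, ∀ h ∈ Finset.Icc 1 H, ∀ s, (∀ b, 0 ≤ π i h s b) ∧ ∑ b, π i h s b = 1

/-- `πi` is a Markov policy for the single agent `i`. -/
def IsPolicyI (H : ℕ) {i : Fin m} (πi : ℕ → S → A i → ℝ) : Prop :=
  ∀ h ∈ Finset.Icc 1 H, ∀ s, (∀ b, 0 ≤ πi h s b) ∧ ∑ b, πi h s b = 1

/-- The mean rewards all lie in `[0,1]`. -/
def IsReward (H : ℕ) (R : Fin m → ℕ → S → (∀ i, A i) → ℝ) : Prop :=
  ∀ i, ∀ h ∈ Finset.Icc 1 H, ∀ s a, R i h s a ∈ Set.Icc (0 : ℝ) 1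

/-- `d_h(s,a) = m/2 + (1/2) ∑_i 1(a_i = π†_{i,h}(s))` of the `d`-portion attack. -/
noncomputable def dfun (τ : ∀ i : Fin m, ℕ → S → A i) (h : ℕ) (s : S) (a : ∀ i, A i) : ℝ :=
  (m : ℝ) / 2 + (∑ i, if a i = τ i h s then (1 : ℝ) else 0) / 2

/-- Post-attack mean rewards of the `d`-portion attack (target `τ`, worse policy `τ'`). -/
noncomputable def Rport (R : Fin m → ℕ → S → (∀ i, A i) → ℝ) (τ τ' : ∀ i : Fin m, ℕ → S → A i)
    (i : Fin m) : ℕ → S → (∀ i, A i) → ℝ :=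
  fun h s a => (dfun τ h s a / m) * R i h s (tgtJ τ h s)
    + (1 - dfun τ h s a / m) * R i h s (tgtJ τ' h s)

/-- Post-attack transition probabilities of the `d`-portion attack. -/
noncomputable def Pport (P : ℕ → S → (∀ i, A i) → S → ℝ) (τ τ' : ∀ i : Fin m, ℕ → S → A i) :
    ℕ → S → (∀ i, A i) → S → ℝ :=
  fun h s a s' => (dfun τ h s a / m) * P h s (tgtJ τ h s) s'
    + (1 - dfun τ h s a / m) * P h s (tgtJ τ' h s) s'

/-- `Δ^{†−}_{i,h}(s) = Q^{π†}_{i,h}(s, π†_h(s)) − Q^{π†}_{i,h}(s, π⁻_h(s))` (original game). -/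
noncomputable def Δdag (P : ℕ → S → (∀ i, A i) → S → ℝ) (R : Fin m → ℕ → S → (∀ i, A i) → ℝ)
    (τ τ' : ∀ i : Fin m, ℕ → S → A i) (H : ℕ) (i : Fin m) (h : ℕ) (s : S) : ℝ :=
  Qf P (R i) (jp (detP τ)) H h s (tgtJ τ h s) - Qf P (R i) (jp (detP τ)) H h s (tgtJ τ' h s)

/-- Post-attack mean rewards of the `η`-gap attack; `ΔR i` is the reward spread of agent `i`. -/
noncomputable def Rgap (R : Fin m → ℕ → S → (∀ i, A i) → ℝ) (τ : ∀ i : Fin m, ℕ → S → A i)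
    (η : ℝ) (ΔR : Fin m → ℝ) (H : ℕ) (i : Fin m) : ℕ → S → (∀ i, A i) → ℝ :=
  fun h s a =>
    if a = tgtJ τ h s then R i h s a
    else R i h s (tgtJ τ h s) - (η + ((H - h : ℕ) : ℝ) * ΔR i) * (if a i = τ i h s then 0 else 1)

/-- Post-attack mean rewards of the mixed attack. -/
noncomputable def Rmix (R : Fin m → ℕ → S → (∀ i, A i) → ℝ) (τ : ∀ i : Fin m, ℕ → S → A i)
    (i : Fin m) : ℕ → S → (∀ i, A i) → ℝ :=
  fun h s a => (if a i = τ i h s then (1 : ℝ) else 0) * R i h s (tgtJ τ h s)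

/-- Post-attack transition probabilities of the mixed attack. -/
def Pmix (P : ℕ → S → (∀ i, A i) → S → ℝ) (τ : ∀ i : Fin m, ℕ → S → A i) :
    ℕ → S → (∀ i, A i) → S → ℝ :=
  fun h s a s' => P h s (tgtJ τ h s) s'

/-- Probability of being in state `s'` after `n` steps, starting from `(h, s)` and following
the deterministic policy `τ` under the transitions `P`. -/
noncomputable def reach (P : ℕ → S → (∀ i, A i) → S → ℝ) (τ : ∀ i : Fin m, ℕ → S → A i) :
    ℕ → ℕ → S → S → ℝ
  | 0, _, s, s' => if s' = s then 1 else 0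
  | n + 1, h, s, s' => ∑ t, P h s (tgtJ τ h s) t * reach P τ n (h + 1) t s'

/-- Expected sum of a state-dependent function along the Markov chain `Ps`. -/
noncomputable def SSum (Ps : ℕ → S → S → ℝ) (f : ℕ → S → ℝ) : ℕ → ℕ → S → ℝ
  | 0, _, _ => 0
  | n + 1, h, s => f h s + ∑ s', Ps h s s' * SSum Ps f n (h + 1) s'

end MGAttack

namespace MGAttack

lemma jp_detP {S : Type} {m : ℕ} {A : Fin m → Type} [∀ i, Fintype (A i)]
    [∀ i, DecidableEq (A i)] (τ : ∀ i : Fin m, ℕ → S → A i) (h : ℕ) (s : S)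
    (a : ∀ i, A i) : jp (detP τ) h s a = if a = tgtJ τ h s then 1 else 0 := by
  unfold jp detP tgtJ
  by_cases hcase : a = fun i => τ i h s
  · subst hcase; simp
  · rw [if_neg hcase]
    obtain ⟨j, hj⟩ : ∃ j, a j ≠ τ j h s := by
      by_contra hc; push_neg at hc; exact hcase (funext hc)
    exact Finset.prod_eq_zero (Finset.mem_univ j) (by simp [hj])

lemma sum_jp_detP {S : Type} {m : ℕ} {A : Fin m → Type} [∀ i, Fintype (A i)]
    [∀ i, DecidableEq (A i)] (τ : ∀ i : Fin m, ℕ → S → A i) (h : ℕ) (s : S)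
    (g : (∀ i, A i) → ℝ) : ∑ a, jp (detP τ) h s a * g a = g (tgtJ τ h s) := by
  simp only [jp_detP, ite_mul, one_mul, zero_mul]
  simp

lemma dfun_tgt {S : Type} {m : ℕ} {A : Fin m → Type} [∀ i, DecidableEq (A i)]
    (τ : ∀ i : Fin m, ℕ → S → A i) (h : ℕ) (s : S) :
    dfun τ h s (tgtJ τ h s) = m := by
  unfold dfun tgtJ; simp

lemma VA_port {S : Type} [Fintype S] [DecidableEq S]
    {m : ℕ} {A : Fin m → Type} [∀ i, Fintype (A i)] [∀ i, DecidableEq (A i)]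
    (hm : 1 ≤ m) (P : ℕ → S → (∀ i, A i) → S → ℝ)
    (R : Fin m → ℕ → S → (∀ i, A i) → ℝ) (τ τ' : ∀ i : Fin m, ℕ → S → A i)
    (i : Fin m) (n : ℕ) : ∀ h s,
    VA (Pport P τ τ') (Rport R τ τ' i) (jp (detP τ)) n h s
      = VA P (R i) (jp (detP τ)) n h s := by
  have hm' : (m : ℝ) ≠ 0 := by positivity
  induction n with
  | zero => intro h s; rfl
  | succ n ih =>
    intro h s
    rw [VA, VA, sum_jp_detP, sum_jp_detP]
    have hd : dfun τ h s (tgtJ τ h s) / m = 1 := by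
      rw [dfun_tgt, div_self hm']
    congr 1
    · unfold Rport; rw [hd]; ring
    · apply Finset.sum_congr rfl; intro s' _
      rw [ih]
      unfold Pport; rw [hd]; ring

/-- Under the `d`-portion attack, the post-attack value of the target policy `π†` equals its
value in the original game, and the post-attack Q-values of `π†` are the `d`-portion mixture
of the original Q-values at the target action `π†_h(s)` and the worse action `π⁻_h(s)`. -/
theorem stmt3 {S : Type} [Fintype S] [DecidableEq S]
    {m : ℕ} {A : Fin m → Type} [∀ i, Fintype (A i)] [∀ i, DecidableEq (A i)]
    (H : ℕ) (hH : 1 ≤ H) (hm : 1 ≤ m)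
    (P : ℕ → S → (∀ i, A i) → S → ℝ) (hP : IsKernel H P)
    (R : Fin m → ℕ → S → (∀ i, A i) → ℝ) (hR : IsReward H R)
    (τ τ' : ∀ i : Fin m, ℕ → S → A i)
    (i : Fin m) (h : ℕ) (hh : h ∈ Finset.Icc 1 H) (s : S) (a : ∀ j, A j) :
    Vf (Pport P τ τ') (Rport R τ τ' i) (jp (detP τ)) H h s = Vf P (R i) (jp (detP τ)) H h s
    ∧ Qf (Pport P τ τ') (Rport R τ τ' i) (jp (detP τ)) H h s a
      = (dfun τ h s a / m) * Qf P (R i) (jp (detP τ)) H h s (tgtJ τ h s)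
        + (1 - dfun τ h s a / m) * Qf P (R i) (jp (detP τ)) H h s (tgtJ τ' h s) := by
  constructor
  · unfold Vf; exact VA_port hm P R τ τ' i _ h s
  · unfold Qf
    have hv : ∀ s', VA (Pport P τ τ') (Rport R τ τ' i) (jp (detP τ)) (H - h) (h + 1) s'
        = VA P (R i) (jp (detP τ)) (H - h) (h + 1) s' :=
      fun s' => VA_port hm P R τ τ' i _ _ s'
    simp only [hv]
    unfold Rport Pport
    rw [Finset.sum_congr rfl (fun s' _ => add_mul (dfun τ h s a / m * P h s (tgtJ τ h s) s')
      ((1 - dfun τ h s a / m) * P h s (tgtJ τ' h s) s')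
      (VA P (R i) (jp (detP τ)) (H - h) (h + 1) s')), Finset.sum_add_distrib]
    simp only [mul_assoc, ← Finset.mul_sum]
    ring

end MGAttack
end

section
/- Let (S, (A_i)_{i=1}^m, H, P, (R_i)_{i=1}^m) be a tabular episodic Markov game satisfying Condition 1 with target policy π† and worse policy π⁻, and assume additionally that for every step h: min_{s,i} Δ^{†−}_{i,h}(s) ≥ ∑_{h'=h+1}^{H} max_{s,i} Δ^{†−}_{i,h'}(s). Then under the d-portion attack, for every Markov product policy π and every initial state s₁: ∑_{i=1}^m [ Ṽ^{π†_i × π_{-i}}_{i,1}(s₁) − Ṽ^{π}_{i,1}(s₁) ] ≥ (Δ_min/(2m²)) · E[ ∑_{h=1}^H ∑_{i=1}^m 1(a_{i,h} ≠ π†_{i,h}(s_h)) ], where the expectation is over trajectories of the post-attack game under π started at s₁. -/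
open Finset

namespace MGAttack

section AuxMGA

set_option linter.unusedSectionVars false
set_option maxHeartbeats 1000000

variable {S : Type} [Fintype S] [DecidableEq S]
variable {m : ℕ} {A : Fin m → Type} [∀ i, Fintype (A i)] [∀ i, DecidableEq (A i)]

/-- deviation count -/
noncomputable def devA (τ : ∀ i : Fin m, ℕ → S → A i) (h : ℕ) (s : S) (a : ∀ i, A i) : ℝ :=
  ∑ j, if a j = τ j h s then (0:ℝ) else 1

noncomputable def Xb (P : ℕ → S → (∀ i, A i) → S → ℝ) (Ri : ℕ → S → (∀ i, A i) → ℝ)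
    (τ0 : ∀ i : Fin m, ℕ → S → A i) (h : ℕ) (s : S) (V : S → ℝ) : ℝ :=
  Ri h s (tgtJ τ0 h s) + ∑ s', P h s (tgtJ τ0 h s) s' * V s'

lemma sum_prod_eq (f : ∀ k : Fin m, A k → ℝ) :
    ∑ a : ∀ k, A k, ∏ k, f k (a k) = ∏ k, ∑ b, f k b := by
  rw [Finset.prod_univ_sum, Fintype.piFinset_univ]

lemma marg (ρ : ∀ k : Fin m, A k → ℝ) (hnorm : ∀ k, ∑ b, ρ k b = 1) (j : Fin m)
    (g : A j → ℝ) :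
    ∑ a : ∀ k, A k, (∏ k, ρ k (a k)) * g (a j) = ∑ b, ρ j b * g b := by
  have key : ∀ a : ∀ k, A k,
      (∏ k, ρ k (a k)) * g (a j) = ∏ k, (Function.update ρ j (fun b => ρ j b * g b)) k (a k) := by
    intro a
    rw [Fintype.prod_eq_mul_prod_compl j, Fintype.prod_eq_mul_prod_compl j
      (f := fun k => (Function.update ρ j (fun b => ρ j b * g b)) k (a k))]
    rw [Function.update_self]
    have h2 : ∀ k ∈ ({j}ᶜ : Finset (Fin m)),
        (Function.update ρ j (fun b => ρ j b * g b)) k (a k) = ρ k (a k) := by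
      intro k hk
      rw [Function.update_of_ne (by simpa using hk)]
    rw [Finset.prod_congr rfl h2]; ring
  rw [Finset.sum_congr rfl (fun a _ => key a), sum_prod_eq]
  rw [Fintype.prod_eq_mul_prod_compl j]
  rw [Function.update_self]
  have h3 : ∀ k ∈ ({j}ᶜ : Finset (Fin m)),
      ∑ b, (Function.update ρ j (fun b => ρ j b * g b)) k b = 1 := by
    intro k hk
    rw [Function.update_of_ne (by simpa using hk)]; exact hnorm k
  rw [Finset.prod_congr rfl h3, Finset.prod_const_one, mul_one]

lemma sum_jp_one (ρ : ∀ k : Fin m, A k → ℝ) (hnorm : ∀ k, ∑ b, ρ k b = 1) :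
    ∑ a : ∀ k, A k, ∏ k, ρ k (a k) = 1 := by
  rw [sum_prod_eq]; simp [hnorm]

lemma sum_point (c : ∀ k, A k) (F : (∀ k, A k) → ℝ) :
    ∑ a : ∀ k, A k, (∏ k, if a k = c k then (1:ℝ) else 0) * F a = F c := by
  have key : ∀ a : ∀ k, A k, (∏ k, if a k = c k then (1:ℝ) else 0) = if a = c then 1 else 0 := by
    intro a
    by_cases h : a = c
    · simp [h]
    · rw [if_neg h]
      obtain ⟨k, hk⟩ : ∃ k, a k ≠ c k := by
        by_contra hc; push_neg at hc; exact h (funext hc)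
      exact Finset.prod_eq_zero (Finset.mem_univ k) (by simp [hk])
  simp only [key, ite_mul, one_mul, zero_mul]
  simp

lemma dfun_eq (hm : 1 ≤ m) (τ : ∀ i : Fin m, ℕ → S → A i) (h : ℕ) (s : S) (a : ∀ i, A i) :
    dfun τ h s a / m = 1 - devA τ h s a / (2 * m) := by
  have hm0 : (m:ℝ) ≠ 0 := Nat.cast_ne_zero.mpr (by omega)
  have hsum : (∑ i, if a i = τ i h s then (1:ℝ) else 0)
      = m - ∑ i, if a i = τ i h s then (0:ℝ) else 1 := by
    rw [eq_sub_iff_add_eq, ← Finset.sum_add_distrib]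
    have h1 : ∀ i : Fin m, ((if a i = τ i h s then (1:ℝ) else 0)
        + if a i = τ i h s then (0:ℝ) else 1) = 1 := by
      intro i; split <;> ring
    rw [Finset.sum_congr rfl (fun i _ => h1 i)]
    simp
  unfold dfun devA
  rw [hsum]; field_simp; ring

lemma devA_nonneg (τ : ∀ i : Fin m, ℕ → S → A i) (h : ℕ) (s : S) (a : ∀ i, A i) :
    0 ≤ devA τ h s a :=
  Finset.sum_nonneg fun j _ => by split <;> norm_num

lemma devA_le (τ : ∀ i : Fin m, ℕ → S → A i) (h : ℕ) (s : S) (a : ∀ i, A i) :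
    devA τ h s a ≤ m := by
  calc devA τ h s a ≤ ∑ _j : Fin m, (1:ℝ) :=
        Finset.sum_le_sum fun j _ => by split <;> norm_num
  _ = m := by simp

lemma mixQ (P : ℕ → S → (∀ i, A i) → S → ℝ) (R : Fin m → ℕ → S → (∀ i, A i) → ℝ)
    (τ τ' : ∀ i : Fin m, ℕ → S → A i) (hm : 1 ≤ m) (i : Fin m) (h : ℕ) (s : S)
    (a : ∀ i, A i) (V : S → ℝ) :
    Rport R τ τ' i h s a + ∑ s', Pport P τ τ' h s a s' * V s'
      = (1 - devA τ h s a / (2 * m)) * Xb P (R i) τ h s V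
        + (devA τ h s a / (2 * m)) * Xb P (R i) τ' h s V := by
  simp only [Rport, Pport, Xb, add_mul, Finset.sum_add_distrib, mul_assoc, ← Finset.mul_sum]
  rw [dfun_eq hm]; ring

lemma Pport_nonneg (P : ℕ → S → (∀ i, A i) → S → ℝ)
    (τ τ' : ∀ i : Fin m, ℕ → S → A i) (hm : 1 ≤ m) (h : ℕ) (s : S) (a : ∀ i, A i) (s' : S)
    (h1 : 0 ≤ P h s (tgtJ τ h s) s') (h2 : 0 ≤ P h s (tgtJ τ' h s) s') :
    0 ≤ Pport P τ τ' h s a s' := by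
  have hmR : (1:ℝ) ≤ m := by exact_mod_cast hm
  have e := dfun_eq hm τ h s a
  have d1 := devA_nonneg τ h s a
  have d2 := devA_le τ h s a
  unfold Pport
  rw [e]
  have hl : 0 ≤ 1 - devA τ h s a / (2 * m) := by
    rw [sub_nonneg, div_le_one (by linarith)]; linarith
  have heq : (1 : ℝ) - (1 - devA τ h s a / (2 * ↑m)) = devA τ h s a / (2*m) := by ring
  rw [heq]
  have hr : 0 ≤ devA τ h s a / (2*m) := by positivity
  positivity

lemma Pport_sum (P : ℕ → S → (∀ i, A i) → S → ℝ)
    (τ τ' : ∀ i : Fin m, ℕ → S → A i) (h : ℕ) (s : S) (a : ∀ i, A i)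
    (h1 : ∑ s', P h s (tgtJ τ h s) s' = 1) (h2 : ∑ s', P h s (tgtJ τ' h s) s' = 1) :
    ∑ s', Pport P τ τ' h s a s' = 1 := by
  unfold Pport
  rw [Finset.sum_add_distrib, ← Finset.mul_sum, ← Finset.mul_sum, h1, h2]; ring

lemma VA_succ (Pp : ℕ → S → (∀ i, A i) → S → ℝ) (f : ℕ → S → (∀ i, A i) → ℝ)
    (ρ : ℕ → S → (∀ i, A i) → ℝ) (n h : ℕ) (s : S) :
    VA Pp f ρ (n+1) h s
      = ∑ a, ρ h s a * (f h s a + ∑ s', Pp h s a s' * VA Pp f ρ n (h + 1) s') := by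
  rw [VA]

lemma detP_sum (τ : ∀ i : Fin m, ℕ → S → A i) (i : Fin m) (h : ℕ) (s : S) :
    ∑ b, detP τ i h s b = 1 := by
  simp [detP]

lemma upd_norm (τ : ∀ i : Fin m, ℕ → S → A i) (π : ∀ j : Fin m, ℕ → S → A j → ℝ)
    (i : Fin m) (h : ℕ) (s : S)
    (hn : ∀ k, ∑ b, π k h s b = 1) (k : Fin m) :
    ∑ b, (Function.update π i (detP τ i)) k h s b = 1 := by
  by_cases hk : k = i
  · subst hk; rw [Function.update_self]; exact detP_sum τ k h s
  · rw [Function.update_of_ne hk]; exact hn k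

lemma upd_nonneg (τ : ∀ i : Fin m, ℕ → S → A i) (π : ∀ j : Fin m, ℕ → S → A j → ℝ)
    (i : Fin m) (h : ℕ) (s : S)
    (hn : ∀ k b, 0 ≤ π k h s b) (k : Fin m) (b : A k) :
    0 ≤ (Function.update π i (detP τ i)) k h s b := by
  by_cases hk : k = i
  · subst hk; rw [Function.update_self]; unfold detP; split <;> norm_num
  · rw [Function.update_of_ne hk]; exact hn k b

lemma sum_indic (i : Fin m) : ∑ j : Fin m, (if j = i then (0:ℝ) else 1) = m - 1 := by
  have h1 : ∀ j : Fin m, (if j = i then (0:ℝ) else 1) = 1 - (if j = i then 1 else 0) := by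
    intro j; split <;> ring
  rw [Finset.sum_congr rfl (fun j _ => h1 j), Finset.sum_sub_distrib]
  simp

lemma claimC
    (H : ℕ) (hm : 1 ≤ m)
    (P : ℕ → S → (∀ i, A i) → S → ℝ) (hP : IsKernel H P)
    (R : Fin m → ℕ → S → (∀ i, A i) → ℝ)
    (τ τ' : ∀ i : Fin m, ℕ → S → A i)
    (hcond : ∀ i : Fin m, ∀ h ∈ Finset.Icc 1 H, ∀ s : S, 0 < Δdag P R τ τ' H i h s)
    (Δhi : ℕ → ℝ)
    (hhi : ∀ h ∈ Finset.Icc 1 H,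
      IsGreatest {x : ℝ | ∃ i : Fin m, ∃ s : S, x = Δdag P R τ τ' H i h s} (Δhi h))
    (π : ∀ j : Fin m, ℕ → S → A j → ℝ) (hπ : IsPolicy H π) (i : Fin m) :
    ∀ n h, h + n = H + 1 → (n = 0 ∨ 1 ≤ h) → ∀ s,
      0 ≤ VA P (R i) (jp (detP τ)) n h s
          - VA (Pport P τ τ') (Rport R τ τ' i) (jp (Function.update π i (detP τ i))) n h s ∧
      VA P (R i) (jp (detP τ)) n h s
          - VA (Pport P τ τ') (Rport R τ τ' i) (jp (Function.update π i (detP τ i))) n h s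
        ≤ ((m:ℝ) - 1) / (2 * m) * ∑ h' ∈ Finset.Icc h H, Δhi h' := by
  intro n
  induction n with
  | zero =>
    intro h hh _ s
    have hH : h = H + 1 := by omega
    subst hH
    have he : Finset.Icc (H+1) H = (∅ : Finset ℕ) := Finset.Icc_eq_empty (by omega)
    simp [VA, he]
  | succ n IH =>
    intro h hh hge s
    have hh1 : 1 ≤ h := by
      rcases hge with h0 | h1
      · omega
      · exact h1
    have hhH : h ≤ H := by omega
    have hmem : h ∈ Finset.Icc 1 H := Finset.mem_Icc.mpr ⟨hh1, hhH⟩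
    have hmR : (1:ℝ) ≤ m := by exact_mod_cast hm
    have h2m : (0:ℝ) < 2*m := by linarith
    have hπnn : ∀ k b, 0 ≤ π k h s b := fun k b => (hπ k h hmem s).1 b
    have hπn1 : ∀ k, ∑ b, π k h s b = 1 := fun k => (hπ k h hmem s).2
    have hq1 : ∑ a, jp (Function.update π i (detP τ i)) h s a = 1 := by
      simpa [jp] using sum_jp_one (fun k => (Function.update π i (detP τ i)) k h s)
        (upd_norm τ π i h s hπn1)
    have hqnn : ∀ a, 0 ≤ jp (Function.update π i (detP τ i)) h s a := fun a =>
      Finset.prod_nonneg fun k _ => upd_nonneg τ π i h s hπnn k (a k)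
    have hPd := hP h hmem s (tgtJ τ h s)
    have hPd' := hP h hmem s (tgtJ τ' h s)
    -- e1 : one step of the point-mass policy in the original game
    have e1 : VA P (R i) (jp (detP τ)) (n+1) h s
        = Xb P (R i) τ h s (VA P (R i) (jp (detP τ)) n (h+1)) := by
      rw [VA_succ]
      have hj : ∀ a : ∀ k, A k, jp (detP τ) h s a
          = ∏ k, if a k = tgtJ τ h s k then (1:ℝ) else 0 := fun a => rfl
      rw [Finset.sum_congr rfl (fun a _ => by rw [hj a])]
      exact sum_point (tgtJ τ h s)
        (fun a => R i h s a + ∑ s', P h s a s' * VA P (R i) (jp (detP τ)) n (h+1) s')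
    -- e2 : one step of the post-attack game under the updated policy
    have e2 : VA (Pport P τ τ') (Rport R τ τ' i) (jp (Function.update π i (detP τ i))) (n+1) h s
        = Xb P (R i) τ h s (VA (Pport P τ τ') (Rport R τ τ' i)
              (jp (Function.update π i (detP τ i))) n (h+1))
          - (∑ a, jp (Function.update π i (detP τ i)) h s a * (devA τ h s a / (2*m)))
            * (Xb P (R i) τ h s (VA (Pport P τ τ') (Rport R τ τ' i)
                  (jp (Function.update π i (detP τ i))) n (h+1))
              - Xb P (R i) τ' h s (VA (Pport P τ τ') (Rport R τ τ' i)
                  (jp (Function.update π i (detP τ i))) n (h+1))) := by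
      rw [VA_succ]
      have hrw : ∀ a : ∀ k, A k,
          jp (Function.update π i (detP τ i)) h s a
            * (Rport R τ τ' i h s a + ∑ s', Pport P τ τ' h s a s'
                * VA (Pport P τ τ') (Rport R τ τ' i)
                    (jp (Function.update π i (detP τ i))) n (h+1) s')
          = jp (Function.update π i (detP τ i)) h s a
              * Xb P (R i) τ h s (VA (Pport P τ τ') (Rport R τ τ' i)
                  (jp (Function.update π i (detP τ i))) n (h+1))
            - (jp (Function.update π i (detP τ i)) h s a * (devA τ h s a / (2*m)))
              * (Xb P (R i) τ h s (VA (Pport P τ τ') (Rport R τ τ' i)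
                    (jp (Function.update π i (detP τ i))) n (h+1))
                - Xb P (R i) τ' h s (VA (Pport P τ τ') (Rport R τ τ' i)
                    (jp (Function.update π i (detP τ i))) n (h+1))) := by
        intro a
        rw [mixQ P R τ τ' hm i h s a]
        ring
      rw [Finset.sum_congr rfl (fun a _ => hrw a), Finset.sum_sub_distrib,
        ← Finset.sum_mul, ← Finset.sum_mul, hq1, one_mul]
    -- bounds on the deviation weight E
    have hE0 : 0 ≤ ∑ a, jp (Function.update π i (detP τ i)) h s a * (devA τ h s a / (2*m)) :=
      Finset.sum_nonneg fun a _ => mul_nonneg (hqnn a)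
        (div_nonneg (devA_nonneg τ h s a) (by linarith))
    have hEc : (∑ a, jp (Function.update π i (detP τ i)) h s a * (devA τ h s a / (2*m)))
        ≤ ((m:ℝ)-1)/(2*m) := by
      have key : ∀ a : ∀ k, A k,
          jp (Function.update π i (detP τ i)) h s a * devA τ h s a
            ≤ jp (Function.update π i (detP τ i)) h s a * ((m:ℝ)-1) := by
        intro a
        by_cases hai : a i = τ i h s
        · refine mul_le_mul_of_nonneg_left ?_ (hqnn a)
          unfold devA
          calc ∑ j, (if a j = τ j h s then (0:ℝ) else 1)
              ≤ ∑ j, (if j = i then (0:ℝ) else 1) := by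
                apply Finset.sum_le_sum
                intro j _
                by_cases hj : j = i
                · subst hj; simp [hai]
                · rw [if_neg hj]; split <;> norm_num
            _ = (m:ℝ) - 1 := sum_indic i
        · have hz : jp (Function.update π i (detP τ i)) h s a = 0 := by
            apply Finset.prod_eq_zero (Finset.mem_univ i)
            simp [Function.update_self, detP, hai]
          rw [hz]; simp
      calc (∑ a, jp (Function.update π i (detP τ i)) h s a * (devA τ h s a / (2*m)))
          = (∑ a, jp (Function.update π i (detP τ i)) h s a * devA τ h s a) / (2*m) := by
            rw [Finset.sum_div]
            exact Finset.sum_congr rfl fun a _ => (mul_div_assoc _ _ _).symm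
        _ ≤ (∑ a, jp (Function.update π i (detP τ i)) h s a * ((m:ℝ)-1)) / (2*m) :=
            (div_le_div_iff_of_pos_right h2m).mpr (Finset.sum_le_sum fun a _ => key a)
        _ = ((m:ℝ)-1)/(2*m) := by rw [← Finset.sum_mul, hq1, one_mul]
    have hE1 : (∑ a, jp (Function.update π i (detP τ i)) h s a * (devA τ h s a / (2*m))) ≤ 1 := by
      refine le_trans hEc ?_
      rw [div_le_one h2m]; linarith
    -- IH facts
    have IH' : ∀ s', 0 ≤ VA P (R i) (jp (detP τ)) n (h+1) s'
          - VA (Pport P τ τ') (Rport R τ τ' i) (jp (Function.update π i (detP τ i))) n (h+1) s' ∧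
        VA P (R i) (jp (detP τ)) n (h+1) s'
          - VA (Pport P τ τ') (Rport R τ τ' i) (jp (Function.update π i (detP τ i))) n (h+1) s'
          ≤ ((m:ℝ)-1)/(2*m) * ∑ h' ∈ Finset.Icc (h+1) H, Δhi h' :=
      fun s' => IH (h+1) (by omega) (Or.inr (by omega)) s'
    have hDp0 : 0 ≤ ((m:ℝ)-1)/(2*m) * ∑ h' ∈ Finset.Icc (h+1) H, Δhi h' :=
      le_trans (IH' s).1 (IH' s).2
    -- u and v
    have hu0 : 0 ≤ ∑ s', P h s (tgtJ τ h s) s' * (VA P (R i) (jp (detP τ)) n (h+1) s'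
          - VA (Pport P τ τ') (Rport R τ τ' i) (jp (Function.update π i (detP τ i))) n (h+1) s') :=
      Finset.sum_nonneg fun s' _ => mul_nonneg (hPd.1 s') (IH' s').1
    have huD : (∑ s', P h s (tgtJ τ h s) s' * (VA P (R i) (jp (detP τ)) n (h+1) s'
          - VA (Pport P τ τ') (Rport R τ τ' i) (jp (Function.update π i (detP τ i))) n (h+1) s'))
        ≤ ((m:ℝ)-1)/(2*m) * ∑ h' ∈ Finset.Icc (h+1) H, Δhi h' := by
      calc _ ≤ ∑ s', P h s (tgtJ τ h s) s'
            * (((m:ℝ)-1)/(2*m) * ∑ h' ∈ Finset.Icc (h+1) H, Δhi h') :=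
            Finset.sum_le_sum fun s' _ => mul_le_mul_of_nonneg_left (IH' s').2 (hPd.1 s')
        _ = _ := by rw [← Finset.sum_mul, hPd.2, one_mul]
    have hv0 : 0 ≤ ∑ s', P h s (tgtJ τ' h s) s' * (VA P (R i) (jp (detP τ)) n (h+1) s'
          - VA (Pport P τ τ') (Rport R τ τ' i) (jp (Function.update π i (detP τ i))) n (h+1) s') :=
      Finset.sum_nonneg fun s' _ => mul_nonneg (hPd'.1 s') (IH' s').1
    have hvD : (∑ s', P h s (tgtJ τ' h s) s' * (VA P (R i) (jp (detP τ)) n (h+1) s'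
          - VA (Pport P τ τ') (Rport R τ τ' i) (jp (Function.update π i (detP τ i))) n (h+1) s'))
        ≤ ((m:ℝ)-1)/(2*m) * ∑ h' ∈ Finset.Icc (h+1) H, Δhi h' := by
      calc _ ≤ ∑ s', P h s (tgtJ τ' h s) s'
            * (((m:ℝ)-1)/(2*m) * ∑ h' ∈ Finset.Icc (h+1) H, Δhi h') :=
            Finset.sum_le_sum fun s' _ => mul_le_mul_of_nonneg_left (IH' s').2 (hPd'.1 s')
        _ = _ := by rw [← Finset.sum_mul, hPd'.2, one_mul]
    -- X differences
    have hXu : Xb P (R i) τ h s (VA P (R i) (jp (detP τ)) n (h+1))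
        - Xb P (R i) τ h s (VA (Pport P τ τ') (Rport R τ τ' i)
            (jp (Function.update π i (detP τ i))) n (h+1))
        = ∑ s', P h s (tgtJ τ h s) s' * (VA P (R i) (jp (detP τ)) n (h+1) s'
          - VA (Pport P τ τ') (Rport R τ τ' i) (jp (Function.update π i (detP τ i))) n (h+1) s') := by
      unfold Xb
      have : ∀ s' : S, P h s (tgtJ τ h s) s' * VA P (R i) (jp (detP τ)) n (h+1) s'
          - P h s (tgtJ τ h s) s' * VA (Pport P τ τ') (Rport R τ τ' i)
              (jp (Function.update π i (detP τ i))) n (h+1) s'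
          = P h s (tgtJ τ h s) s' * (VA P (R i) (jp (detP τ)) n (h+1) s'
            - VA (Pport P τ τ') (Rport R τ τ' i)
                (jp (Function.update π i (detP τ i))) n (h+1) s') := fun s' => by ring
      rw [show ∀ (x y c : ℝ), c + x - (c + y) = x - y from fun x y c => by ring]
      rw [← Finset.sum_sub_distrib, Finset.sum_congr rfl (fun s' _ => this s')]
    have hYv : Xb P (R i) τ' h s (VA P (R i) (jp (detP τ)) n (h+1))
        - Xb P (R i) τ' h s (VA (Pport P τ τ') (Rport R τ τ' i)
            (jp (Function.update π i (detP τ i))) n (h+1))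
        = ∑ s', P h s (tgtJ τ' h s) s' * (VA P (R i) (jp (detP τ)) n (h+1) s'
          - VA (Pport P τ τ') (Rport R τ τ' i) (jp (Function.update π i (detP τ i))) n (h+1) s') := by
      unfold Xb
      have : ∀ s' : S, P h s (tgtJ τ' h s) s' * VA P (R i) (jp (detP τ)) n (h+1) s'
          - P h s (tgtJ τ' h s) s' * VA (Pport P τ τ') (Rport R τ τ' i)
              (jp (Function.update π i (detP τ i))) n (h+1) s'
          = P h s (tgtJ τ' h s) s' * (VA P (R i) (jp (detP τ)) n (h+1) s'
            - VA (Pport P τ τ') (Rport R τ τ' i)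
                (jp (Function.update π i (detP τ i))) n (h+1) s') := fun s' => by ring
      rw [show ∀ (x y c : ℝ), c + x - (c + y) = x - y from fun x y c => by ring]
      rw [← Finset.sum_sub_distrib, Finset.sum_congr rfl (fun s' _ => this s')]
    -- Δdag bridge
    have hΔeq : Δdag P R τ τ' H i h s
        = Xb P (R i) τ h s (VA P (R i) (jp (detP τ)) n (h+1))
          - Xb P (R i) τ' h s (VA P (R i) (jp (detP τ)) n (h+1)) := by
      unfold Δdag Qf Xb
      rw [show H - h = n from by omega]
    have hΔ0 : 0 ≤ Δdag P R τ τ' H i h s := le_of_lt (hcond i h hmem s)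
    have hΔhi : Δdag P R τ τ' H i h s ≤ Δhi h := (hhi h hmem).2 ⟨i, s, rfl⟩
    have hΔhi0 : 0 ≤ Δhi h := le_trans hΔ0 hΔhi
    have hc0 : 0 ≤ ((m:ℝ)-1)/(2*m) := by
      apply div_nonneg <;> linarith
    -- the difference identity
    have hdiff : VA P (R i) (jp (detP τ)) (n+1) h s
        - VA (Pport P τ τ') (Rport R τ τ' i) (jp (Function.update π i (detP τ i))) (n+1) h s
        = (∑ s', P h s (tgtJ τ h s) s' * (VA P (R i) (jp (detP τ)) n (h+1) s'
            - VA (Pport P τ τ') (Rport R τ τ' i) (jp (Function.update π i (detP τ i))) n (h+1) s'))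
          + (∑ a, jp (Function.update π i (detP τ i)) h s a * (devA τ h s a / (2*m)))
            * (Δdag P R τ τ' H i h s
              - (∑ s', P h s (tgtJ τ h s) s' * (VA P (R i) (jp (detP τ)) n (h+1) s'
                  - VA (Pport P τ τ') (Rport R τ τ' i)
                      (jp (Function.update π i (detP τ i))) n (h+1) s'))
              + (∑ s', P h s (tgtJ τ' h s) s' * (VA P (R i) (jp (detP τ)) n (h+1) s'
                  - VA (Pport P τ τ') (Rport R τ τ' i)
                      (jp (Function.update π i (detP τ i))) n (h+1) s'))) := by
      rw [e1, e2, hΔeq]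
      linear_combination (1 - (∑ a, jp (Function.update π i (detP τ i)) h s a
        * (devA τ h s a / (2*m)))) * hXu
        + (∑ a, jp (Function.update π i (detP τ i)) h s a * (devA τ h s a / (2*m))) * hYv
    constructor
    · rw [hdiff]
      nlinarith [mul_nonneg hE0 hv0, mul_nonneg hE0 hΔ0,
        mul_nonneg (sub_nonneg.mpr hE1) hu0]
    · rw [hdiff]
      have hsplit : ∑ h' ∈ Finset.Icc h H, Δhi h'
          = Δhi h + ∑ h' ∈ Finset.Icc (h+1) H, Δhi h' := by
        rw [Finset.Icc_add_one_left_eq_Ioc, Finset.Icc_eq_cons_Ioc hhH, Finset.sum_cons]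
      rw [hsplit, mul_add]
      nlinarith [mul_nonneg (sub_nonneg.mpr hE1) (sub_nonneg.mpr huD),
        mul_nonneg hE0 (sub_nonneg.mpr hvD),
        mul_nonneg (sub_nonneg.mpr hEc) hΔ0,
        mul_nonneg hc0 (sub_nonneg.mpr hΔhi)]

lemma gapG
    (H : ℕ) (hm : 1 ≤ m)
    (P : ℕ → S → (∀ i, A i) → S → ℝ) (hP : IsKernel H P)
    (R : Fin m → ℕ → S → (∀ i, A i) → ℝ)
    (τ τ' : ∀ i : Fin m, ℕ → S → A i)
    (hcond : ∀ i : Fin m, ∀ h ∈ Finset.Icc 1 H, ∀ s : S, 0 < Δdag P R τ τ' H i h s)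
    (Δmin : ℝ)
    (hΔmin : IsLeast {x : ℝ | ∃ i : Fin m, ∃ h ∈ Finset.Icc 1 H, ∃ s : S,
        x = Δdag P R τ τ' H i h s} Δmin)
    (Δlo Δhi : ℕ → ℝ)
    (hlo : ∀ h ∈ Finset.Icc 1 H,
      IsLeast {x : ℝ | ∃ i : Fin m, ∃ s : S, x = Δdag P R τ τ' H i h s} (Δlo h))
    (hhi : ∀ h ∈ Finset.Icc 1 H,
      IsGreatest {x : ℝ | ∃ i : Fin m, ∃ s : S, x = Δdag P R τ τ' H i h s} (Δhi h))
    (hstep : ∀ h ∈ Finset.Icc 1 H, ∑ h' ∈ Finset.Icc (h + 1) H, Δhi h' ≤ Δlo h)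
    (π : ∀ j : Fin m, ℕ → S → A j → ℝ) (hπ : IsPolicy H π) (i : Fin m)
    (n h : ℕ) (hn : h + n = H) (hh1 : 1 ≤ h) (s : S) :
    Δmin / m ≤ Xb P (R i) τ h s (VA (Pport P τ τ') (Rport R τ τ' i)
          (jp (Function.update π i (detP τ i))) n (h+1))
      - Xb P (R i) τ' h s (VA (Pport P τ τ') (Rport R τ τ' i)
          (jp (Function.update π i (detP τ i))) n (h+1)) := by
  have hhH : h ≤ H := by omega
  have hmem : h ∈ Finset.Icc 1 H := Finset.mem_Icc.mpr ⟨hh1, hhH⟩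
  have hmR : (1:ℝ) ≤ m := by exact_mod_cast hm
  have hmpos : (0:ℝ) < m := by linarith
  have hc0 : (0:ℝ) ≤ ((m:ℝ)-1)/(2*m) := by apply div_nonneg <;> linarith
  have hPd := hP h hmem s (tgtJ τ h s)
  have hPd' := hP h hmem s (tgtJ τ' h s)
  have IH' : ∀ s', 0 ≤ VA P (R i) (jp (detP τ)) n (h+1) s'
        - VA (Pport P τ τ') (Rport R τ τ' i) (jp (Function.update π i (detP τ i))) n (h+1) s' ∧
      VA P (R i) (jp (detP τ)) n (h+1) s'
        - VA (Pport P τ τ') (Rport R τ τ' i) (jp (Function.update π i (detP τ i))) n (h+1) s'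
        ≤ ((m:ℝ)-1)/(2*m) * ∑ h' ∈ Finset.Icc (h+1) H, Δhi h' :=
    fun s' => claimC H hm P hP R τ τ' hcond Δhi hhi π hπ i n (h+1)
      (by omega) (Or.inr (by omega)) s'
  have hu0 : 0 ≤ ∑ s', P h s (tgtJ τ h s) s' * (VA P (R i) (jp (detP τ)) n (h+1) s'
        - VA (Pport P τ τ') (Rport R τ τ' i) (jp (Function.update π i (detP τ i))) n (h+1) s') :=
    Finset.sum_nonneg fun s' _ => mul_nonneg (hPd.1 s') (IH' s').1
  have huD : (∑ s', P h s (tgtJ τ h s) s' * (VA P (R i) (jp (detP τ)) n (h+1) s'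
        - VA (Pport P τ τ') (Rport R τ τ' i) (jp (Function.update π i (detP τ i))) n (h+1) s'))
      ≤ ((m:ℝ)-1)/(2*m) * ∑ h' ∈ Finset.Icc (h+1) H, Δhi h' := by
    calc _ ≤ ∑ s', P h s (tgtJ τ h s) s'
          * (((m:ℝ)-1)/(2*m) * ∑ h' ∈ Finset.Icc (h+1) H, Δhi h') :=
          Finset.sum_le_sum fun s' _ => mul_le_mul_of_nonneg_left (IH' s').2 (hPd.1 s')
      _ = _ := by rw [← Finset.sum_mul, hPd.2, one_mul]
  have hv0 : 0 ≤ ∑ s', P h s (tgtJ τ' h s) s' * (VA P (R i) (jp (detP τ)) n (h+1) s'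
        - VA (Pport P τ τ') (Rport R τ τ' i) (jp (Function.update π i (detP τ i))) n (h+1) s') :=
    Finset.sum_nonneg fun s' _ => mul_nonneg (hPd'.1 s') (IH' s').1
  have hXu : Xb P (R i) τ h s (VA P (R i) (jp (detP τ)) n (h+1))
      - Xb P (R i) τ h s (VA (Pport P τ τ') (Rport R τ τ' i)
          (jp (Function.update π i (detP τ i))) n (h+1))
      = ∑ s', P h s (tgtJ τ h s) s' * (VA P (R i) (jp (detP τ)) n (h+1) s'
        - VA (Pport P τ τ') (Rport R τ τ' i) (jp (Function.update π i (detP τ i))) n (h+1) s') := by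
    unfold Xb
    rw [show ∀ (x y c : ℝ), c + x - (c + y) = x - y from fun x y c => by ring]
    rw [← Finset.sum_sub_distrib]
    exact Finset.sum_congr rfl fun s' _ => by ring
  have hYv : Xb P (R i) τ' h s (VA P (R i) (jp (detP τ)) n (h+1))
      - Xb P (R i) τ' h s (VA (Pport P τ τ') (Rport R τ τ' i)
          (jp (Function.update π i (detP τ i))) n (h+1))
      = ∑ s', P h s (tgtJ τ' h s) s' * (VA P (R i) (jp (detP τ)) n (h+1) s'
        - VA (Pport P τ τ') (Rport R τ τ' i) (jp (Function.update π i (detP τ i))) n (h+1) s') := by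
    unfold Xb
    rw [show ∀ (x y c : ℝ), c + x - (c + y) = x - y from fun x y c => by ring]
    rw [← Finset.sum_sub_distrib]
    exact Finset.sum_congr rfl fun s' _ => by ring
  have hΔeq : Δdag P R τ τ' H i h s
      = Xb P (R i) τ h s (VA P (R i) (jp (detP τ)) n (h+1))
        - Xb P (R i) τ' h s (VA P (R i) (jp (detP τ)) n (h+1)) := by
    unfold Δdag Qf Xb
    rw [show H - h = n from by omega]
  have hΔlo : Δlo h ≤ Δdag P R τ τ' H i h s := (hlo h hmem).2 ⟨i, s, rfl⟩
  have hΔminlo : Δmin ≤ Δlo h := by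
    obtain ⟨i0, s0, he⟩ := (hlo h hmem).1
    exact hΔmin.2 ⟨i0, h, hmem, s0, he⟩
  have hΔminpos : 0 < Δmin := by
    obtain ⟨i0, h0, hh0, s0, he⟩ := hΔmin.1
    rw [he]; exact hcond i0 h0 hh0 s0
  have hDlo : ((m:ℝ)-1)/(2*m) * ∑ h' ∈ Finset.Icc (h+1) H, Δhi h'
      ≤ ((m:ℝ)-1)/(2*m) * Δlo h :=
    mul_le_mul_of_nonneg_left (hstep h hmem) hc0
  have hfin : Δmin / m ≤ Δlo h - ((m:ℝ)-1)/(2*m) * Δlo h := by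
    rw [div_le_iff₀ hmpos]
    have e : (Δlo h - ((m:ℝ)-1)/(2*m) * Δlo h) * m = Δlo h * ((m:ℝ)+1)/2 := by
      field_simp; ring
    rw [e]
    nlinarith [mul_nonneg (by linarith : (0:ℝ) ≤ (m:ℝ)-1) (by linarith : (0:ℝ) ≤ Δlo h)]
  linarith

lemma mainLem
    (H : ℕ) (hm : 1 ≤ m)
    (P : ℕ → S → (∀ i, A i) → S → ℝ) (hP : IsKernel H P)
    (R : Fin m → ℕ → S → (∀ i, A i) → ℝ)
    (τ τ' : ∀ i : Fin m, ℕ → S → A i)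
    (hcond : ∀ i : Fin m, ∀ h ∈ Finset.Icc 1 H, ∀ s : S, 0 < Δdag P R τ τ' H i h s)
    (Δmin : ℝ)
    (hΔmin : IsLeast {x : ℝ | ∃ i : Fin m, ∃ h ∈ Finset.Icc 1 H, ∃ s : S,
        x = Δdag P R τ τ' H i h s} Δmin)
    (Δlo Δhi : ℕ → ℝ)
    (hlo : ∀ h ∈ Finset.Icc 1 H,
      IsLeast {x : ℝ | ∃ i : Fin m, ∃ s : S, x = Δdag P R τ τ' H i h s} (Δlo h))
    (hhi : ∀ h ∈ Finset.Icc 1 H,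
      IsGreatest {x : ℝ | ∃ i : Fin m, ∃ s : S, x = Δdag P R τ τ' H i h s} (Δhi h))
    (hstep : ∀ h ∈ Finset.Icc 1 H, ∑ h' ∈ Finset.Icc (h + 1) H, Δhi h' ≤ Δlo h)
    (π : ∀ j : Fin m, ℕ → S → A j → ℝ) (hπ : IsPolicy H π) :
    ∀ n h, h + n = H + 1 → (n = 0 ∨ 1 ≤ h) → ∀ s,
      Δmin / (2 * (m:ℝ)^2) * VA (Pport P τ τ') (devA τ) (jp π) n h s
        ≤ ∑ i : Fin m,
            (VA (Pport P τ τ') (Rport R τ τ' i) (jp (Function.update π i (detP τ i))) n h s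
              - VA (Pport P τ τ') (Rport R τ τ' i) (jp π) n h s) := by
  intro n
  induction n with
  | zero =>
    intro h hh _ s
    simp [VA]
  | succ n IH =>
    intro h hh hge s
    have hh1 : 1 ≤ h := by
      rcases hge with h0 | h1
      · omega
      · exact h1
    have hhH : h ≤ H := by omega
    have hmem : h ∈ Finset.Icc 1 H := Finset.mem_Icc.mpr ⟨hh1, hhH⟩
    have hmR : (1:ℝ) ≤ m := by exact_mod_cast hm
    have hm0 : (m:ℝ) ≠ 0 := by positivity
    have h2m : (0:ℝ) < 2*m := by linarith
    have hπnn : ∀ k b, 0 ≤ π k h s b := fun k b => (hπ k h hmem s).1 b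
    have hπn1 : ∀ k, ∑ b, π k h s b = 1 := fun k => (hπ k h hmem s).2
    have hq1 : ∑ a, jp π h s a = 1 := by
      simpa [jp] using sum_jp_one (fun k => π k h s) hπn1
    have hqnn : ∀ a, 0 ≤ jp π h s a := fun a =>
      Finset.prod_nonneg fun k _ => hπnn k (a k)
    have hqI1 : ∀ i : Fin m, ∑ a, jp (Function.update π i (detP τ i)) h s a = 1 := fun i => by
      simpa [jp] using sum_jp_one (fun k => (Function.update π i (detP τ i)) k h s)
        (upd_norm τ π i h s hπn1)
    have hPd := hP h hmem s (tgtJ τ h s)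
    have hPd' := hP h hmem s (tgtJ τ' h s)
    have hPpnn : ∀ a s', 0 ≤ Pport P τ τ' h s a s' := fun a s' =>
      Pport_nonneg P τ τ' hm h s a s' (hPd.1 s') (hPd'.1 s')
    -- expected per-agent deviation probabilities
    have hEq : ∑ a, jp π h s a * devA τ h s a
        = ∑ j, ∑ b, π j h s b * (if b = τ j h s then (0:ℝ) else 1) := by
      have e1 : ∀ a, jp π h s a * devA τ h s a
          = ∑ j, jp π h s a * (if a j = τ j h s then (0:ℝ) else 1) := by
        intro a; rw [devA, Finset.mul_sum]
      rw [Finset.sum_congr rfl fun a _ => e1 a, Finset.sum_comm]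
      refine Finset.sum_congr rfl fun j _ => ?_
      simpa [jp] using marg (fun k => π k h s) hπn1 j
        (fun b => if b = τ j h s then (0:ℝ) else 1)
    have hEI : ∀ i : Fin m, ∑ a, jp (Function.update π i (detP τ i)) h s a * devA τ h s a
        = (∑ j, ∑ b, π j h s b * (if b = τ j h s then (0:ℝ) else 1))
          - ∑ b, π i h s b * (if b = τ i h s then (0:ℝ) else 1) := by
      intro i
      have e1 : ∀ a, jp (Function.update π i (detP τ i)) h s a * devA τ h s a
          = ∑ j, jp (Function.update π i (detP τ i)) h s a
              * (if a j = τ j h s then (0:ℝ) else 1) := by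
        intro a; rw [devA, Finset.mul_sum]
      rw [Finset.sum_congr rfl fun a _ => e1 a, Finset.sum_comm]
      have e2 : ∀ j : Fin m, (∑ a, jp (Function.update π i (detP τ i)) h s a
          * (if a j = τ j h s then (0:ℝ) else 1))
          = ∑ b, (Function.update π i (detP τ i)) j h s b * (if b = τ j h s then (0:ℝ) else 1) := by
        intro j
        simpa [jp] using marg (fun k => (Function.update π i (detP τ i)) k h s)
          (upd_norm τ π i h s hπn1) j (fun b => if b = τ j h s then (0:ℝ) else 1)
      rw [Finset.sum_congr rfl fun j _ => e2 j]
      have e3 : ∀ j : Fin m, (∑ b, (Function.update π i (detP τ i)) j h s b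
            * (if b = τ j h s then (0:ℝ) else 1))
          = (∑ b, π j h s b * (if b = τ j h s then (0:ℝ) else 1))
            - (if j = i then ∑ b, π i h s b * (if b = τ i h s then (0:ℝ) else 1) else 0) := by
        intro j
        by_cases hj : j = i
        · subst hj
          rw [if_pos rfl, Function.update_self]
          have : ∀ b, detP τ j h s b * (if b = τ j h s then (0:ℝ) else 1) = 0 := by
            intro b; unfold detP; split <;> simp
          rw [Finset.sum_congr rfl fun b _ => this b]
          simp
        · rw [Function.update_of_ne hj, if_neg hj, sub_zero]
      rw [Finset.sum_congr rfl fun j _ => e3 j, Finset.sum_sub_distrib]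
      congr 1
      simp
    -- one-step identity for each agent
    have hper : ∀ i : Fin m,
        VA (Pport P τ τ') (Rport R τ τ' i) (jp (Function.update π i (detP τ i))) (n+1) h s
          - VA (Pport P τ τ') (Rport R τ τ' i) (jp π) (n+1) h s
        = (∑ b, π i h s b * (if b = τ i h s then (0:ℝ) else 1)) / (2*m)
            * (Xb P (R i) τ h s (VA (Pport P τ τ') (Rport R τ τ' i)
                  (jp (Function.update π i (detP τ i))) n (h+1))
              - Xb P (R i) τ' h s (VA (Pport P τ τ') (Rport R τ τ' i)
                  (jp (Function.update π i (detP τ i))) n (h+1)))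
          + ∑ a, jp π h s a * ∑ s', Pport P τ τ' h s a s'
              * (VA (Pport P τ τ') (Rport R τ τ' i)
                    (jp (Function.update π i (detP τ i))) n (h+1) s'
                - VA (Pport P τ τ') (Rport R τ τ' i) (jp π) n (h+1) s') := by
      intro i
      rw [VA_succ, VA_succ]
      -- rewrite the πᶦ-sum via the mixture structure
      have hrw1 : ∀ a : ∀ k, A k,
          jp (Function.update π i (detP τ i)) h s a
            * (Rport R τ τ' i h s a + ∑ s', Pport P τ τ' h s a s'
                * VA (Pport P τ τ') (Rport R τ τ' i)
                    (jp (Function.update π i (detP τ i))) n (h+1) s')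
          = jp (Function.update π i (detP τ i)) h s a
              * Xb P (R i) τ h s (VA (Pport P τ τ') (Rport R τ τ' i)
                  (jp (Function.update π i (detP τ i))) n (h+1))
            - (jp (Function.update π i (detP τ i)) h s a * devA τ h s a) / (2*m)
              * (Xb P (R i) τ h s (VA (Pport P τ τ') (Rport R τ τ' i)
                    (jp (Function.update π i (detP τ i))) n (h+1))
                - Xb P (R i) τ' h s (VA (Pport P τ τ') (Rport R τ τ' i)
                    (jp (Function.update π i (detP τ i))) n (h+1))) := by
        intro a
        rw [mixQ P R τ τ' hm i h s a]
        ring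
      have hrw2 : ∀ a : ∀ k, A k,
          jp π h s a
            * (Rport R τ τ' i h s a + ∑ s', Pport P τ τ' h s a s'
                * VA (Pport P τ τ') (Rport R τ τ' i) (jp π) n (h+1) s')
          = (jp π h s a
              * Xb P (R i) τ h s (VA (Pport P τ τ') (Rport R τ τ' i)
                  (jp (Function.update π i (detP τ i))) n (h+1))
            - (jp π h s a * devA τ h s a) / (2*m)
              * (Xb P (R i) τ h s (VA (Pport P τ τ') (Rport R τ τ' i)
                    (jp (Function.update π i (detP τ i))) n (h+1))
                - Xb P (R i) τ' h s (VA (Pport P τ τ') (Rport R τ τ' i)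
                    (jp (Function.update π i (detP τ i))) n (h+1))))
            - jp π h s a * ∑ s', Pport P τ τ' h s a s'
                * (VA (Pport P τ τ') (Rport R τ τ' i)
                      (jp (Function.update π i (detP τ i))) n (h+1) s'
                  - VA (Pport P τ τ') (Rport R τ τ' i) (jp π) n (h+1) s') := by
        intro a
        have hsub : ∑ s', Pport P τ τ' h s a s'
              * (VA (Pport P τ τ') (Rport R τ τ' i)
                    (jp (Function.update π i (detP τ i))) n (h+1) s'
                - VA (Pport P τ τ') (Rport R τ τ' i) (jp π) n (h+1) s')
            = (∑ s', Pport P τ τ' h s a s'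
                * VA (Pport P τ τ') (Rport R τ τ' i)
                    (jp (Function.update π i (detP τ i))) n (h+1) s')
              - ∑ s', Pport P τ τ' h s a s'
                * VA (Pport P τ τ') (Rport R τ τ' i) (jp π) n (h+1) s' := by
          rw [← Finset.sum_sub_distrib]
          exact Finset.sum_congr rfl fun s' _ => by ring
        have hmix := mixQ P R τ τ' hm i h s a
          (VA (Pport P τ τ') (Rport R τ τ' i) (jp (Function.update π i (detP τ i))) n (h+1))
        have goal' : jp π h s a * (Rport R τ τ' i h s a + ∑ s', Pport P τ τ' h s a s'
                * VA (Pport P τ τ') (Rport R τ τ' i)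
                    (jp (Function.update π i (detP τ i))) n (h+1) s')
            = jp π h s a
              * Xb P (R i) τ h s (VA (Pport P τ τ') (Rport R τ τ' i)
                  (jp (Function.update π i (detP τ i))) n (h+1))
            - (jp π h s a * devA τ h s a) / (2*m)
              * (Xb P (R i) τ h s (VA (Pport P τ τ') (Rport R τ τ' i)
                    (jp (Function.update π i (detP τ i))) n (h+1))
                - Xb P (R i) τ' h s (VA (Pport P τ τ') (Rport R τ τ' i)
                    (jp (Function.update π i (detP τ i))) n (h+1))) := by
          rw [hmix]; ring
        calc jp π h s a * (Rport R τ τ' i h s a + ∑ s', Pport P τ τ' h s a s'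
                * VA (Pport P τ τ') (Rport R τ τ' i) (jp π) n (h+1) s')
            = jp π h s a * (Rport R τ τ' i h s a + ∑ s', Pport P τ τ' h s a s'
                * VA (Pport P τ τ') (Rport R τ τ' i)
                    (jp (Function.update π i (detP τ i))) n (h+1) s')
              - jp π h s a * ∑ s', Pport P τ τ' h s a s'
                  * (VA (Pport P τ τ') (Rport R τ τ' i)
                        (jp (Function.update π i (detP τ i))) n (h+1) s'
                    - VA (Pport P τ τ') (Rport R τ τ' i) (jp π) n (h+1) s') := by
              rw [hsub]; ring
          _ = _ := by rw [goal']
      have s1 : (∑ a, jp (Function.update π i (detP τ i)) h s a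
            * Xb P (R i) τ h s (VA (Pport P τ τ') (Rport R τ τ' i)
                (jp (Function.update π i (detP τ i))) n (h+1)))
          = Xb P (R i) τ h s (VA (Pport P τ τ') (Rport R τ τ' i)
              (jp (Function.update π i (detP τ i))) n (h+1)) := by
        rw [← Finset.sum_mul, hqI1 i, one_mul]
      have s2 : (∑ a, jp π h s a
            * Xb P (R i) τ h s (VA (Pport P τ τ') (Rport R τ τ' i)
                (jp (Function.update π i (detP τ i))) n (h+1)))
          = Xb P (R i) τ h s (VA (Pport P τ τ') (Rport R τ τ' i)
              (jp (Function.update π i (detP τ i))) n (h+1)) := by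
        rw [← Finset.sum_mul, hq1, one_mul]
      have t1 : (∑ a, jp (Function.update π i (detP τ i)) h s a * devA τ h s a / (2*m)
            * (Xb P (R i) τ h s (VA (Pport P τ τ') (Rport R τ τ' i)
                  (jp (Function.update π i (detP τ i))) n (h+1))
              - Xb P (R i) τ' h s (VA (Pport P τ τ') (Rport R τ τ' i)
                  (jp (Function.update π i (detP τ i))) n (h+1))))
          = ((∑ j, ∑ b, π j h s b * (if b = τ j h s then (0:ℝ) else 1))
              - ∑ b, π i h s b * (if b = τ i h s then (0:ℝ) else 1)) / (2*m)
            * (Xb P (R i) τ h s (VA (Pport P τ τ') (Rport R τ τ' i)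
                  (jp (Function.update π i (detP τ i))) n (h+1))
              - Xb P (R i) τ' h s (VA (Pport P τ τ') (Rport R τ τ' i)
                  (jp (Function.update π i (detP τ i))) n (h+1))) := by
        rw [← Finset.sum_mul, ← Finset.sum_div, hEI i]
      have t2 : (∑ a, jp π h s a * devA τ h s a / (2*m)
            * (Xb P (R i) τ h s (VA (Pport P τ τ') (Rport R τ τ' i)
                  (jp (Function.update π i (detP τ i))) n (h+1))
              - Xb P (R i) τ' h s (VA (Pport P τ τ') (Rport R τ τ' i)
                  (jp (Function.update π i (detP τ i))) n (h+1))))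
          = (∑ j, ∑ b, π j h s b * (if b = τ j h s then (0:ℝ) else 1)) / (2*m)
            * (Xb P (R i) τ h s (VA (Pport P τ τ') (Rport R τ τ' i)
                  (jp (Function.update π i (detP τ i))) n (h+1))
              - Xb P (R i) τ' h s (VA (Pport P τ τ') (Rport R τ τ' i)
                  (jp (Function.update π i (detP τ i))) n (h+1))) := by
        rw [← Finset.sum_mul, ← Finset.sum_div, hEq]
      rw [Finset.sum_congr rfl fun a _ => hrw1 a, Finset.sum_congr rfl fun a _ => hrw2 a,
        Finset.sum_sub_distrib, Finset.sum_sub_distrib, Finset.sum_sub_distrib,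
        s1, s2, t1, t2]
      ring
    -- dev-count one-step identity
    have hdev : VA (Pport P τ τ') (devA τ) (jp π) (n+1) h s
        = (∑ j, ∑ b, π j h s b * (if b = τ j h s then (0:ℝ) else 1))
          + ∑ a, jp π h s a * ∑ s', Pport P τ τ' h s a s'
              * VA (Pport P τ τ') (devA τ) (jp π) n (h+1) s' := by
      rw [VA_succ]
      have : ∀ a : ∀ k, A k, jp π h s a * (devA τ h s a + ∑ s', Pport P τ τ' h s a s'
            * VA (Pport P τ τ') (devA τ) (jp π) n (h+1) s')
          = jp π h s a * devA τ h s a + jp π h s a * ∑ s', Pport P τ τ' h s a s'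
              * VA (Pport P τ τ') (devA τ) (jp π) n (h+1) s' := fun a => by ring
      rw [Finset.sum_congr rfl fun a _ => this a, Finset.sum_add_distrib, hEq]
    -- bound on the A-terms
    have hp0 : ∀ i : Fin m, 0 ≤ ∑ b, π i h s b * (if b = τ i h s then (0:ℝ) else 1) :=
      fun i => Finset.sum_nonneg fun b _ => mul_nonneg (hπnn i b) (by split <;> norm_num)
    have hTA : ∀ i : Fin m,
        Δmin / (2 * (m:ℝ)^2) * (∑ b, π i h s b * (if b = τ i h s then (0:ℝ) else 1))
          ≤ (∑ b, π i h s b * (if b = τ i h s then (0:ℝ) else 1)) / (2*m)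
            * (Xb P (R i) τ h s (VA (Pport P τ τ') (Rport R τ τ' i)
                  (jp (Function.update π i (detP τ i))) n (h+1))
              - Xb P (R i) τ' h s (VA (Pport P τ τ') (Rport R τ τ' i)
                  (jp (Function.update π i (detP τ i))) n (h+1))) := by
      intro i
      have hgap := gapG H hm P hP R τ τ' hcond Δmin hΔmin Δlo Δhi hlo hhi hstep π hπ i
        n h (by omega) hh1 s
      calc Δmin / (2 * (m:ℝ)^2) * (∑ b, π i h s b * (if b = τ i h s then (0:ℝ) else 1))
          = (∑ b, π i h s b * (if b = τ i h s then (0:ℝ) else 1)) / (2*m) * (Δmin / m) := by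
            field_simp
        _ ≤ _ := mul_le_mul_of_nonneg_left hgap (div_nonneg (hp0 i) (by linarith))
    -- bound on the B-terms
    have hswap : ∑ i : Fin m, (∑ a, jp π h s a * ∑ s', Pport P τ τ' h s a s'
          * (VA (Pport P τ τ') (Rport R τ τ' i)
                (jp (Function.update π i (detP τ i))) n (h+1) s'
            - VA (Pport P τ τ') (Rport R τ τ' i) (jp π) n (h+1) s'))
        = ∑ a, jp π h s a * ∑ s', Pport P τ τ' h s a s'
            * ∑ i : Fin m, (VA (Pport P τ τ') (Rport R τ τ' i)
                  (jp (Function.update π i (detP τ i))) n (h+1) s'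
              - VA (Pport P τ τ') (Rport R τ τ' i) (jp π) n (h+1) s') := by
      rw [Finset.sum_comm]
      refine Finset.sum_congr rfl fun a _ => ?_
      rw [← Finset.mul_sum]
      congr 1
      rw [Finset.sum_comm]
      refine Finset.sum_congr rfl fun s' _ => ?_
      rw [← Finset.mul_sum]
    have hTB : Δmin / (2 * (m:ℝ)^2) * (∑ a, jp π h s a * ∑ s', Pport P τ τ' h s a s'
          * VA (Pport P τ τ') (devA τ) (jp π) n (h+1) s')
        ≤ ∑ i : Fin m, (∑ a, jp π h s a * ∑ s', Pport P τ τ' h s a s'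
            * (VA (Pport P τ τ') (Rport R τ τ' i)
                  (jp (Function.update π i (detP τ i))) n (h+1) s'
              - VA (Pport P τ τ') (Rport R τ τ' i) (jp π) n (h+1) s')) := by
      rw [hswap]
      have hIH : ∀ s', Δmin / (2 * (m:ℝ)^2) * VA (Pport P τ τ') (devA τ) (jp π) n (h+1) s'
          ≤ ∑ i : Fin m, (VA (Pport P τ τ') (Rport R τ τ' i)
                (jp (Function.update π i (detP τ i))) n (h+1) s'
            - VA (Pport P τ τ') (Rport R τ τ' i) (jp π) n (h+1) s') :=
        fun s' => IH (h+1) (by omega) (Or.inr (by omega)) s'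
      calc Δmin / (2 * (m:ℝ)^2) * (∑ a, jp π h s a * ∑ s', Pport P τ τ' h s a s'
            * VA (Pport P τ τ') (devA τ) (jp π) n (h+1) s')
          = ∑ a, jp π h s a * ∑ s', Pport P τ τ' h s a s'
              * (Δmin / (2 * (m:ℝ)^2) * VA (Pport P τ τ') (devA τ) (jp π) n (h+1) s') := by
            rw [Finset.mul_sum]
            refine Finset.sum_congr rfl fun a _ => ?_
            have e : ∑ s', Pport P τ τ' h s a s'
                  * (Δmin / (2 * (m:ℝ)^2) * VA (Pport P τ τ') (devA τ) (jp π) n (h+1) s')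
                = Δmin / (2 * (m:ℝ)^2) * ∑ s', Pport P τ τ' h s a s'
                    * VA (Pport P τ τ') (devA τ) (jp π) n (h+1) s' := by
              rw [Finset.mul_sum]
              exact Finset.sum_congr rfl fun s' _ => by ring
            rw [e]; ring
        _ ≤ _ := by
            refine Finset.sum_le_sum fun a _ => mul_le_mul_of_nonneg_left ?_ (hqnn a)
            exact Finset.sum_le_sum fun s' _ =>
              mul_le_mul_of_nonneg_left (hIH s') (hPpnn a s')
    -- assemble
    rw [Finset.sum_congr rfl fun i _ => hper i, Finset.sum_add_distrib, hdev, mul_add]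
    have hTAsum : Δmin / (2 * (m:ℝ)^2)
          * (∑ j, ∑ b, π j h s b * (if b = τ j h s then (0:ℝ) else 1))
        ≤ ∑ i : Fin m, ((∑ b, π i h s b * (if b = τ i h s then (0:ℝ) else 1)) / (2*m)
            * (Xb P (R i) τ h s (VA (Pport P τ τ') (Rport R τ τ' i)
                  (jp (Function.update π i (detP τ i))) n (h+1))
              - Xb P (R i) τ' h s (VA (Pport P τ τ') (Rport R τ τ' i)
                  (jp (Function.update π i (detP τ i))) n (h+1)))) := by
      rw [Finset.mul_sum]
      exact Finset.sum_le_sum fun i _ => hTA i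
    linarith

end AuxMGA

/-- Under Condition 1, the step-gap condition
`min_{s,i} Δ^{†−}_{i,h}(s) ≥ ∑_{h'>h} max_{s,i} Δ^{†−}_{i,h'}(s)`, and the `d`-portion
attack: for every Markov product policy `π` and initial state `s₁`, the total unilateral
improvement of switching each agent to `π†_i` is at least `Δ_min/(2m²)` times the expected
number of deviating agent-steps under `π` in the post-attack game. -/
theorem stmt7 {S : Type} [Fintype S] [DecidableEq S]
    {m : ℕ} {A : Fin m → Type} [∀ i, Fintype (A i)] [∀ i, DecidableEq (A i)]
    (H : ℕ) (hH : 1 ≤ H) (hm : 1 ≤ m)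
    (P : ℕ → S → (∀ i, A i) → S → ℝ) (hP : IsKernel H P)
    (R : Fin m → ℕ → S → (∀ i, A i) → ℝ) (hR : IsReward H R)
    (τ τ' : ∀ i : Fin m, ℕ → S → A i)
    -- Condition 1
    (hcond : ∀ i : Fin m, ∀ h ∈ Finset.Icc 1 H, ∀ s : S, 0 < Δdag P R τ τ' H i h s)
    (Δmin : ℝ)
    (hΔmin : IsLeast {x : ℝ | ∃ i : Fin m, ∃ h ∈ Finset.Icc 1 H, ∃ s : S,
        x = Δdag P R τ τ' H i h s} Δmin)
    (Δlo Δhi : ℕ → ℝ)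
    (hlo : ∀ h ∈ Finset.Icc 1 H,
      IsLeast {x : ℝ | ∃ i : Fin m, ∃ s : S, x = Δdag P R τ τ' H i h s} (Δlo h))
    (hhi : ∀ h ∈ Finset.Icc 1 H,
      IsGreatest {x : ℝ | ∃ i : Fin m, ∃ s : S, x = Δdag P R τ τ' H i h s} (Δhi h))
    (hstep : ∀ h ∈ Finset.Icc 1 H, ∑ h' ∈ Finset.Icc (h + 1) H, Δhi h' ≤ Δlo h)
    (π : ∀ j : Fin m, ℕ → S → A j → ℝ) (hπ : IsPolicy H π) (s₁ : S) :
    (Δmin / (2 * (m : ℝ) ^ 2)) * VA (Pport P τ τ')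
        (fun h s a => ∑ j : Fin m, (if a j = τ j h s then (0 : ℝ) else 1)) (jp π) H 1 s₁
      ≤ ∑ i : Fin m,
          (Vf (Pport P τ τ') (Rport R τ τ' i) (jp (Function.update π i (detP τ i))) H 1 s₁
            - Vf (Pport P τ τ') (Rport R τ τ' i) (jp π) H 1 s₁) := by
  have e : (fun h s (a : ∀ i, A i) => ∑ j : Fin m, (if a j = τ j h s then (0:ℝ) else 1))
      = devA τ := rfl
  simp only [Vf, Nat.add_sub_cancel]
  rw [e]
  exact mainLem H hm P hP R τ τ' hcond Δmin hΔmin Δlo Δhi hlo hhi hstep π hπ H 1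
    (by omega) (Or.inr le_rfl) s₁

end MGAttack
end
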